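/- Let D be a linearly connected digraph with strong components D_1, ..., D_η, η ≥ 2, and let F be the subdigraph of D induced on V_2 ∪ ... ∪ V_η (so F is linearly connected with strong components D_2, ..., D_η). Then for every positive integer m, the m-step competition graph C(F^m) equals the induced subgraph of C(D^m) on V_2 ∪ ... ∪ V_η. Consequently, if the sequence {C(D^m)}_{m≥1} converges to a graph G, then {C(F^m)}_{m≥1} converges to the induced subgraph of G on V_2 ∪ ... ∪ V_η. -/

import Mathlib

/-!
No arc of a linearly connected digraph goes from a later strong component to an earlier one, so
`V_2 ∪ ⋯ ∪ V_η` is closed under out-arcs. Every walk of `D` starting there therefore stays there and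
is a walk of `F`, so `F` and `D` have the same `m`-step prey relation on these vertices, hence the same
`m`-step competition graph, and limits pass to the induced subgraph.
-/

/-- A digraph: a finite vertex type with an irreflexive arc relation (no loops). -/
structure Digraph' (V : Type*) where
  Adj : V → V → Prop
  irrefl : ∀ v, ¬ Adj v v

namespace Digraph'

variable {V : Type*}

/-- There is a directed walk of length `m` from `x` to `y` in `D`;
i.e. `y` is an `m`-step prey of `x`. -/
def HasWalk (D : Digraph' V) (m : ℕ) (x y : V) : Prop :=
  ∃ f : ℕ → V, f 0 = x ∧ f m = y ∧ ∀ t, t < m → D.Adj (f t) (f (t + 1))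

/-- There is a directed walk of length `m` from `x` to `y` staying inside `S`. -/
def HasWalkIn (D : Digraph' V) (S : Set V) (m : ℕ) (x y : V) : Prop :=
  ∃ f : ℕ → V, f 0 = x ∧ f m = y ∧ (∀ t, t ≤ m → f t ∈ S) ∧
    ∀ t, t < m → D.Adj (f t) (f (t + 1))

/-- The `m`-step competition graph `C(D^m)` of `D`. -/
def compGraph (D : Digraph' V) (m : ℕ) : SimpleGraph V where
  Adj u v := u ≠ v ∧ ∃ z, D.HasWalk m u z ∧ D.HasWalk m v z
  symm := by
    refine ⟨?_⟩
    rintro u v ⟨hne, z, h1, h2⟩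
    exact ⟨hne.symm, z, h2, h1⟩
  loopless := ⟨fun v h => h.1 rfl⟩

/-- The sequence `{C(D^m)}_{m ≥ 1}` converges. -/
def CompConverges (D : Digraph' V) : Prop :=
  ∃ N : ℕ, 1 ≤ N ∧ ∀ m, N ≤ m → D.compGraph m = D.compGraph N

/-- The sequence `{C(D^m)}_{m ≥ 1}` converges to the graph `G`. -/
def CompConvergesTo (D : Digraph' V) (G : SimpleGraph V) : Prop :=
  ∃ N : ℕ, 1 ≤ N ∧ ∀ m, N ≤ m → D.compGraph m = G

/-- `D` is linearly connected with strong components `Vset 1, …, Vset η`. -/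
structure IsLinConn (D : Digraph' V) (η : ℕ) (Vset : ℕ → Set V) : Prop where
  nonempty : ∀ i, 1 ≤ i → i ≤ η → (Vset i).Nonempty
  cover : ∀ v : V, ∃ i, 1 ≤ i ∧ i ≤ η ∧ v ∈ Vset i
  disjoint' : ∀ i j, 1 ≤ i → i ≤ η → 1 ≤ j → j ≤ η →
      ∀ v : V, v ∈ Vset i → v ∈ Vset j → i = j
  strong : ∀ i, 1 ≤ i → i ≤ η → ∀ x ∈ Vset i, ∀ y ∈ Vset i,
      ∃ m, D.HasWalkIn (Vset i) m x y
  arcs : ∀ x y : V, D.Adj x y → ∃ i, 1 ≤ i ∧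
      ((i ≤ η ∧ x ∈ Vset i ∧ y ∈ Vset i) ∨
       (i + 1 ≤ η ∧ x ∈ Vset i ∧ y ∈ Vset (i + 1)))
  linked : ∀ i, 1 ≤ i → i + 1 ≤ η → ∃ x ∈ Vset i, ∃ y ∈ Vset (i + 1), D.Adj x y

/-- A component with vertex set `S` is trivial if `S` is a singleton. -/
def IsTrivialComp (S : Set V) : Prop := ∃ v : V, S = {v}

/-- `κ` is the index of imprimitivity of the (strong) component with vertex set `S`:
the gcd of the lengths of all closed directed walks inside `S`. -/
def IsImprimIndex (D : Digraph' V) (S : Set V) (κ : ℕ) : Prop :=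
  (∀ (x : V) (m : ℕ), x ∈ S → 0 < m → D.HasWalkIn S m x x → κ ∣ m) ∧
  ∀ d : ℕ, (∀ (x : V) (m : ℕ), x ∈ S → 0 < m → D.HasWalkIn S m x x → d ∣ m) → d ∣ κ

/-- `u` is an imprimitivity labelling on `S`: along any arc inside `S` the label
increases by one.  Its fibers are the sets of imprimitivity. -/
def IsImprimLabelling (D : Digraph' V) (S : Set V) {κ : ℕ} (u : V → ZMod κ) : Prop :=
  ∀ x ∈ S, ∀ y ∈ S, D.Adj x y → u y = u x + 1

/-- `(k, l) ∈ I(D_{p,p+1})`: some arc goes from a vertex of `U_k^{(p)}` to a vertex of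
`U_l^{(p+1)}`. -/
def InI (D : Digraph' V) (Vset : ℕ → Set V) {κ : ℕ → ℕ}
    (u : ∀ i : ℕ, V → ZMod (κ i)) (p : ℕ) (k : ZMod (κ p)) (l : ZMod (κ (p + 1))) : Prop :=
  ∃ x ∈ Vset p, ∃ y ∈ Vset (p + 1), D.Adj x y ∧ u p x = k ∧ u (p + 1) y = l

/-- `(i, j)` is an edge of the bipartite graph `B_{p,p+1}`. -/
def BAdj (D : Digraph' V) (Vset : ℕ → Set V) {κ : ℕ → ℕ}
    (u : ∀ i : ℕ, V → ZMod (κ i)) (p : ℕ) (i : ZMod (κ p)) (j : ZMod (κ (p + 1))) : Prop :=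
  ∃ (k : ZMod (κ p)) (l : ZMod (κ (p + 1))) (a : ℤ),
    InI D Vset u p k l ∧ i = k + 1 + (a : ZMod (κ p)) ∧ j = l + (a : ZMod (κ (p + 1)))

/-- The competition skeleton graph (CS-graph) `PT_D^{(η)}`: vertices are pairs `⟨r, i⟩`
with `i ∈ ZMod (κ r)` (only `1 ≤ r ≤ η` carries edges); `⟨p, i⟩` and `⟨p+1, j⟩` are
adjacent exactly when `i` and `j` are adjacent in `B_{p,p+1}`. -/
def csGraph (D : Digraph' V) (Vset : ℕ → Set V) {κ : ℕ → ℕ}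
    (u : ∀ i : ℕ, V → ZMod (κ i)) (η : ℕ) : SimpleGraph ((r : ℕ) × ZMod (κ r)) where
  Adj a b := ∃ p, 1 ≤ p ∧ p + 1 ≤ η ∧ ∃ (i : ZMod (κ p)) (j : ZMod (κ (p + 1))),
    BAdj D Vset u p i j ∧
    ((a = ⟨p, i⟩ ∧ b = ⟨p + 1, j⟩) ∨ (a = ⟨p + 1, j⟩ ∧ b = ⟨p, i⟩))
  symm := by
    refine ⟨?_⟩
    rintro a b ⟨p, h1, h2, i, j, hB, hab⟩
    exact ⟨p, h1, h2, i, j, hB,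
      hab.elim (fun h => Or.inr ⟨h.2, h.1⟩) (fun h => Or.inl ⟨h.2, h.1⟩)⟩
  loopless := by
    refine ⟨?_⟩
    rintro a ⟨p, _, _, i, j, _, hab⟩
    rcases hab with ⟨ha, hb⟩ | ⟨ha, hb⟩
    · have h : p = p + 1 := congrArg Sigma.fst (ha.symm.trans hb)
      omega
    · have h : p + 1 = p := congrArg Sigma.fst (ha.symm.trans hb)
      omega

end Digraph'

namespace Digraph'

variable {V : Type*}

def induce (D : Digraph' V) (W : Set V) : Digraph' W :=
  ⟨fun a b => D.Adj a.1 b.1, fun a h => D.irrefl a.1 h⟩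

def IsOutClosed (D : Digraph' V) (W : Set V) : Prop :=
  ∀ ⦃x y : V⦄, x ∈ W → D.Adj x y → y ∈ W

variable {D : Digraph' V} {W : Set V}

theorem IsOutClosed.walk_mem (hW : D.IsOutClosed W) {f : ℕ → V} {m : ℕ} (h0 : f 0 ∈ W)
    (hf : ∀ t, t < m → D.Adj (f t) (f (t + 1))) : ∀ t, t ≤ m → f t ∈ W := by
  intro t ht
  induction t with
  | zero => exact h0
  | succ t ih => exact hW (ih (by omega)) (hf t (by omega))

theorem IsOutClosed.mem_of_hasWalk (hW : D.IsOutClosed W) {m : ℕ} {x y : V} (hx : x ∈ W)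
    (h : D.HasWalk m x y) : y ∈ W := by
  obtain ⟨f, rfl, rfl, hf⟩ := h
  exact hW.walk_mem hx hf m le_rfl

theorem HasWalk.of_induce {m : ℕ} {x y : W} (h : (D.induce W).HasWalk m x y) :
    D.HasWalk m x y := by
  obtain ⟨g, rfl, rfl, hg⟩ := h
  exact ⟨fun t => g t, rfl, rfl, hg⟩

theorem IsOutClosed.hasWalk_induce (hW : D.IsOutClosed W) {m : ℕ} {x y : W}
    (h : D.HasWalk m x y) : (D.induce W).HasWalk m x y := by
  obtain ⟨f, hf0, hfm, hf⟩ := h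
  have hmem := hW.walk_mem (hf0 ▸ x.2) hf
  -- `f` is only constrained up to time `m`, so freeze it there to keep it inside `W`.
  refine ⟨fun t => ⟨f (min t m), hmem _ (min_le_right t m)⟩, ?_, ?_, fun t ht => ?_⟩
  · exact Subtype.ext (by simp [hf0])
  · exact Subtype.ext (by simp [hfm])
  · change D.Adj (f (min t m)) (f (min (t + 1) m))
    rw [min_eq_left ht.le, min_eq_left ht]
    exact hf t ht

theorem IsOutClosed.hasWalk_induce_iff (hW : D.IsOutClosed W) {m : ℕ} {x y : W} :
    (D.induce W).HasWalk m x y ↔ D.HasWalk m x y :=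
  ⟨HasWalk.of_induce, hW.hasWalk_induce⟩

theorem IsOutClosed.compGraph_induce (hW : D.IsOutClosed W) (m : ℕ) :
    (D.induce W).compGraph m = (D.compGraph m).induce W := by
  ext u v
  change (u ≠ v ∧ ∃ z, _ ∧ _) ↔ (u.1 ≠ v.1 ∧ ∃ z, D.HasWalk m u z ∧ D.HasWalk m v z)
  simp only [hW.hasWalk_induce_iff, ne_eq, Subtype.val_inj]
  refine and_congr_right fun _ => ⟨fun ⟨z, hu, hv⟩ => ⟨z, hu, hv⟩, fun ⟨z, hu, hv⟩ => ?_⟩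
  exact ⟨⟨z, hW.mem_of_hasWalk u.2 hu⟩, hu, hv⟩

theorem IsOutClosed.compConvergesTo_induce (hW : D.IsOutClosed W) {G : SimpleGraph V}
    (hG : D.CompConvergesTo G) : (D.induce W).CompConvergesTo (G.induce W) := by
  obtain ⟨N, hN, hconv⟩ := hG
  exact ⟨N, hN, fun m hm => by rw [hW.compGraph_induce, hconv m hm]⟩

theorem IsLinConn.isOutClosed_tail {η : ℕ} {Vset : ℕ → Set V} (hD : D.IsLinConn η Vset)
    {k : ℕ} (hk : 1 ≤ k) : D.IsOutClosed {v | ∃ i, k ≤ i ∧ i ≤ η ∧ v ∈ Vset i} := by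
  rintro x y ⟨i, hki, hiη, hxi⟩ hxy
  obtain ⟨j, hj, ⟨hjη, hxj, hyj⟩ | ⟨hjη, hxj, hyj⟩⟩ := hD.arcs x y hxy
  · obtain rfl := hD.disjoint' i j (by omega) hiη hj hjη x hxi hxj
    exact ⟨i, hki, hiη, hyj⟩
  · obtain rfl := hD.disjoint' i j (by omega) hiη hj (by omega) x hxi hxj
    exact ⟨i + 1, by omega, hjη, hyj⟩

end Digraph'

open Digraph' in
theorem stmt17_general {V : Type*} (D : Digraph' V) (η : ℕ) (Vset : ℕ → Set V)
    (hD : D.IsLinConn η Vset) :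
    let W : Set V := {v | ∃ i, 2 ≤ i ∧ i ≤ η ∧ v ∈ Vset i}
    let F : Digraph' W := ⟨fun a b => D.Adj a.1 b.1, fun a h => D.irrefl a.1 h⟩
    (∀ m, 1 ≤ m → F.compGraph m = (D.compGraph m).induce W) ∧
    (∀ G : SimpleGraph V, D.CompConvergesTo G → F.CompConvergesTo (G.induce W)) := by
  have hW := hD.isOutClosed_tail (k := 2) (by norm_num)
  exact ⟨fun m _ => hW.compGraph_induce m, fun _ hG => hW.compConvergesTo_induce hG⟩

open Digraph' in
/-- deleting the first strong component: the `m`-step competition graph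
of the induced subdigraph `F` on `V_2 ∪ ⋯ ∪ V_η` is the induced subgraph of `C(D^m)`,
and limits correspond. -/
theorem stmt17 {V : Type*} [Fintype V] (D : Digraph' V) (η : ℕ) (Vset : ℕ → Set V)
    (hD : D.IsLinConn η Vset) (hη : 2 ≤ η) :
    let W : Set V := {v | ∃ i, 2 ≤ i ∧ i ≤ η ∧ v ∈ Vset i}
    let F : Digraph' W := ⟨fun a b => D.Adj a.1 b.1, fun a h => D.irrefl a.1 h⟩
    (∀ m, 1 ≤ m → F.compGraph m = (D.compGraph m).induce W) ∧
    (∀ G : SimpleGraph V, D.CompConvergesTo G → F.CompConvergesTo (G.induce W)) :=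
  stmt17_general D η Vset hD
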